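/- arXiv:0902.3387 — 5 statements merged into one kernel-verified Lean document; each statement's English description precedes it below -/
import Mathlib

section
/- Any LC^n separable metric space X is locally polyhedrally n-connected; that is, for every x ∈ X and every neighborhood V of x there is a neighborhood W of x such that the pair W ⊆ V is polyhedrally n-connected. -/
open Set Metric Topology Filter
open scoped ENNReal

noncomputable section

/-- The `n`-dimensional unit sphere, as a subspace of `ℝ^{n+1}`. -/
abbrev NSphere (n : ℕ) : Type := Metric.sphere (0 : EuclideanSpace ℝ (Fin (n + 1))) 1

/-- A continuous map `f` is null-homotopic within the set `U`: it is homotopic to a constant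
map through maps whose values stay in `U`. -/
def NullHomotopicIn {S Y : Type*} [TopologicalSpace S] [TopologicalSpace Y]
    (f : C(S, Y)) (U : Set Y) : Prop :=
  ∃ y₀ ∈ U, ∃ H : ContinuousMap.Homotopy f (ContinuousMap.const S y₀), ∀ p, H p ∈ U

/-- A pair of subspaces `V ⊆ U` of `Y` is `n`-aspheric if every continuous map of the
`n`-sphere into `V` is null-homotopic in `U`. -/
def AsphericPair (n : ℕ) {Y : Type*} [TopologicalSpace Y] (V U : Set Y) : Prop :=
  ∀ f : C(NSphere n, Y), (∀ z, f z ∈ V) → NullHomotopicIn f U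

/-- The pair `V ⊆ U` is `k`-aspheric for every `-1 ≤ k ≤ n`, where `(-1)`-asphericity
means that `U` is nonempty. -/
def AsphericPairUpTo (n : ℕ) {Y : Type*} [TopologicalSpace Y] (V U : Set Y) : Prop :=
  U.Nonempty ∧ ∀ k ≤ n, AsphericPair k V U

/-- A space is `LC^n` if every neighborhood `V` of any point contains a smaller
neighborhood `W` such that the pair `W ⊆ V` is `k`-aspheric for all `k ≤ n`. -/
def IsLC (n : ℕ) (X : Type*) [TopologicalSpace X] : Prop :=
  ∀ x : X, ∀ V ∈ 𝓝 x, ∃ W ∈ 𝓝 x, W ⊆ V ∧ AsphericPairUpTo n W V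

/-- A pair `V ⊆ U` is polyhedrally `n`-connected if for every finite `n`-dimensional
polyhedron `M` (realized as a finite simplicial complex in some Euclidean space) and every
closed subpolyhedron `A ⊆ M`, every continuous map `A → V` extends to a continuous map
`M → U`. -/
def PolyConnPair (n : ℕ) {Y : Type*} [TopologicalSpace Y] (V U : Set Y) : Prop :=
  ∀ (N : ℕ) (M A : Geometry.SimplicialComplex ℝ (EuclideanSpace ℝ (Fin N))),
    M.faces.Finite → (∀ s ∈ M.faces, s.card ≤ n + 1) → A.faces ⊆ M.faces →
    ∀ f : C(A.space, Y), (∀ a, f a ∈ V) →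
      ∃ g : C(M.space, Y), (∀ z, g z ∈ U) ∧
        ∀ (z : EuclideanSpace ℝ (Fin N)) (hA : z ∈ A.space) (hM : z ∈ M.space),
          g ⟨z, hM⟩ = f ⟨z, hA⟩

/-- An ANR: a separable metrizable space which, whenever embedded as a closed subset of a
separable metric space, is a retract of some neighborhood of itself. -/
def IsANR (X : Type*) [TopologicalSpace X] : Prop :=
  TopologicalSpace.SeparableSpace X ∧ TopologicalSpace.MetrizableSpace X ∧
    ∀ (Z : Type) [MetricSpace Z] [TopologicalSpace.SeparableSpace Z] (e : X → Z),
      IsClosedEmbedding e →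
        ∃ U : Set Z, IsOpen U ∧ Set.range e ⊆ U ∧
          ∃ r : C(U, Z), (∀ u : U, r u ∈ Set.range e) ∧
            ∀ u : U, (u : Z) ∈ Set.range e → r u = u

/-- Upper semicontinuity of a multivalued mapping. -/
def UscSetMap {X Y : Type*} [TopologicalSpace X] [TopologicalSpace Y] (F : X → Set Y) : Prop :=
  ∀ U : Set Y, IsOpen U → IsOpen {x | F x ⊆ U}

/-- A compact multivalued mapping: upper semicontinuous with compact point-images. -/
def CompactSetMap {X Y : Type*} [TopologicalSpace X] [TopologicalSpace Y] (F : X → Set Y) : Prop :=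
  UscSetMap F ∧ ∀ x, IsCompact (F x)

/-- The graph of a multivalued mapping. -/
def graphOf {X Y : Type*} (F : X → Set Y) : Set (X × Y) := {p | p.2 ∈ F p.1}

/-- The graph in `X × Y` of a multivalued mapping defined on a subset `A ⊆ X`. -/
def graphOn {X Y : Type*} (A : Set X) (Ψ : A → Set Y) : Set (X × Y) :=
  {p | ∃ h : p.1 ∈ A, p.2 ∈ Ψ ⟨p.1, h⟩}

/-- The open `ε`-neighborhood of a set `S ⊆ X × Y` with respect to the sum metric
`dist ((x,y),(x',y')) = dist x x' + dist y y'`. -/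
def SumBall {X Y : Type*} [MetricSpace X] [MetricSpace Y] (S : Set (X × Y)) (ε : ℝ) :
    Set (X × Y) :=
  {p | ∃ q ∈ S, dist p.1 q.1 + dist p.2 q.2 < ε}

/-- The gauge `cal F = sup {diam (F x)}` of a multivalued mapping, valued in `ℝ≥0∞`. -/
def calGauge {X Y : Type*} [MetricSpace Y] (Ψ : X → Set Y) : ℝ≥0∞ :=
  ⨆ x, EMetric.diam (Ψ x)

/-- A pair of compacta `K ⊆ K'` in `Y` is approximately `n`-aspheric if for some embedding
of (the subspace) `K'` into an ANR `Z`, every neighborhood `U` of the image of `K'` contains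
a neighborhood `V` of the image of `K` such that the pair `V ⊆ U` is `n`-aspheric. -/
def ApproxAsphericPair (n : ℕ) {Y : Type*} [TopologicalSpace Y] (K K' : Set Y) : Prop :=
  ∃ (Z : Type) (tZ : TopologicalSpace Z),
    letI : TopologicalSpace Z := tZ
    IsANR Z ∧
      ∃ e : K' → Z, IsEmbedding e ∧
        ∀ U : Set Z, IsOpen U → Set.range e ⊆ U →
          ∃ V : Set Z, IsOpen V ∧ e '' {p : K' | (p : Y) ∈ K} ⊆ V ∧ V ⊆ U ∧ AsphericPair n V U

/-- A subspace `S ⊆ Y` is hereditarily coconnectedly aspheric if every compactum `K ⊆ S`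
with connected complement `S \ K` is approximately aspheric (approximately `n`-aspheric for
every `n ≥ 2`). -/
def HCAset {Y : Type*} [TopologicalSpace Y] (S : Set Y) : Prop :=
  ∀ K : Set Y, K ⊆ S → IsCompact K → IsConnected (S \ K) →
    ∀ n : ℕ, 2 ≤ n → ApproxAsphericPair n K K

/-- A pair `V ⊆ U` of subsets of the space `Z` is coconnected if `Z \ U` lies in one
connected component of `Z \ V`. -/
def CoconnectedPair {Z : Type*} [TopologicalSpace Z] (V U : Set Z) : Prop :=
  ∃ C : Set Z, C ⊆ Vᶜ ∧ IsPreconnected C ∧ Uᶜ ⊆ C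

/-- A pair `V ⊆ U` of subsets of `Z ⊆ Y` is coconnected in `Z` if `Z \ U` lies in one
connected component of `Z \ V`. -/
def CoconnectedPairIn {Y : Type*} [TopologicalSpace Y] (Z V U : Set Y) : Prop :=
  ∃ C : Set Y, C ⊆ Z \ V ∧ IsPreconnected C ∧ Z \ U ⊆ C

/-- The `G₁`-coconnectification of `F₀`: the union of `F₀` and all connected components of
the complement of `F₀` which do not intersect the complement of `G₁`. -/
def coconnectification {Z : Type*} [TopologicalSpace Z] (G₁ F₀ : Set Z) : Set Z :=
  F₀ ∪ {z | z ∈ F₀ᶜ ∧ connectedComponentIn F₀ᶜ z ⊆ G₁}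

/-- The `G₁`-coconnectification of `F₀` inside the subspace `Z ⊆ Y`: the union of `F₀` and
all connected components of `Z \ F₀` which do not intersect `Z \ G₁`. -/
def coconnectificationIn {Y : Type*} [TopologicalSpace Y] (Z G₁ F₀ : Set Y) : Set Y :=
  F₀ ∪ {z | z ∈ Z \ F₀ ∧ connectedComponentIn (Z \ F₀) z ⊆ G₁}

/-- A proper ordering on subsets of `Y`. -/
def ProperOrdering {Y : Type*} (α : Set Y → Set Y → Prop) : Prop :=
  (∀ W V, α W V → W ⊆ V) ∧
    (∀ W V R, W ⊆ V → α V R → α W R) ∧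
      (∀ W V R, α W V → V ⊆ R → α W R)

/-- A multivalued mapping `F` is equi locally of type `α`. -/
def EquiLocallyOfType {X Y : Type*} [TopologicalSpace X] [TopologicalSpace Y]
    (α : Set Y → Set Y → Prop) (F : X → Set Y) : Prop :=
  ∀ x : X, ∀ y ∈ F x, ∀ V ∈ 𝓝 y, ∃ W ∈ 𝓝 y, ∃ U ∈ 𝓝 x,
    ∀ x' ∈ U, α (W ∩ F x') (V ∩ F x')

/-- A multivalued mapping is equi-`LC^n`. -/
def EquiLC (n : ℕ) {X Y : Type*} [TopologicalSpace X] [TopologicalSpace Y]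
    (F : X → Set Y) : Prop :=
  EquiLocallyOfType (fun W V => AsphericPairUpTo n W V) F

/-- A multivalued mapping is equi locally polyhedrally `n`-connected. -/
def EquiLocallyPolyConn (n : ℕ) {X Y : Type*} [TopologicalSpace X] [TopologicalSpace Y]
    (F : X → Set Y) : Prop :=
  EquiLocallyOfType (fun W V => PolyConnPair n W V) F

/-- A multivalued mapping is equi locally hereditarily coconnectedly aspheric. -/
def EquiLocallyHCA {X Y : Type*} [TopologicalSpace X] [TopologicalSpace Y]
    (F : X → Set Y) : Prop :=
  EquiLocallyOfType (fun W _ => HCAset W) F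

/-- A multivalued mapping is equi locally coconnected. -/
def EquiLocallyCoconnected {X Y : Type*} [TopologicalSpace X] [TopologicalSpace Y]
    (F : X → Set Y) : Prop :=
  ∀ x : X, ∀ y ∈ F x, ∀ V ∈ 𝓝 y, ∃ W ∈ 𝓝 y, ∃ U ∈ 𝓝 x,
    ∀ x' ∈ U, CoconnectedPairIn (F x') (W ∩ F x') (V ∩ F x')

/-- A complete multivalued mapping: there is a `Gδ` set `S` containing the graph such that
every set `{x} × G x` is (relatively) closed in `S`. -/
def CompleteSetMap {X Y : Type*} [TopologicalSpace X] [TopologicalSpace Y]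
    (G : X → Set Y) : Prop :=
  ∃ S : Set (X × Y), IsGδ S ∧ graphOf G ⊆ S ∧
    ∀ x : X, ∃ C : Set (X × Y), IsClosed C ∧ ({x} ×ˢ G x) = C ∩ S

/-- `Φ` is a compact approximately connected filtration (of infinite length) of the
multivalued mapping `F`. -/
def CompactApproxConnFiltration {X Y : Type*} [TopologicalSpace X] [TopologicalSpace Y]
    (F : X → Set Y) (Φ : ℕ → X → Set Y) : Prop :=
  (∀ k x, (Φ k x).Nonempty) ∧ (∀ k x, Φ k x ⊆ Φ (k + 1) x) ∧ (∀ k x, Φ k x ⊆ F x) ∧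
    (∀ k, CompactSetMap (Φ k)) ∧ ∀ k x, ApproxAsphericPair k (Φ k x) (Φ (k + 1) x)

/-- `F` admits a compact approximately connected filtration of infinite length. -/
def AdmitsCACFiltration {X Y : Type*} [TopologicalSpace X] [TopologicalSpace Y]
    (F : X → Set Y) : Prop :=
  ∃ Φ : ℕ → X → Set Y, CompactApproxConnFiltration F Φ

/-- A multivalued mapping admits continuous approximations: every neighborhood of its graph
contains the graph of a single-valued continuous map. -/
def AdmitsContinuousApprox {X Y : Type*} [TopologicalSpace X] [TopologicalSpace Y]
    (F : X → Set Y) : Prop :=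
  ∀ O : Set (X × Y), IsOpen O → graphOf F ⊆ O → ∃ f : C(X, Y), ∀ x, (x, f x) ∈ O

/-- A Serre fibration: a continuous surjection having the homotopy lifting property with
respect to all finite-dimensional cubes. -/
def IsSerreFibration {E B : Type*} [TopologicalSpace E] [TopologicalSpace B] (p : E → B) :
    Prop :=
  Continuous p ∧ Function.Surjective p ∧
    ∀ (n : ℕ) (H : C((Fin n → unitInterval) × unitInterval, B))
      (h₀ : C(Fin n → unitInterval, E)),
      (∀ z, p (h₀ z) = H (z, 0)) →
        ∃ G : C((Fin n → unitInterval) × unitInterval, E),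
          (∀ q, p (G q) = H q) ∧ ∀ z, G (z, 0) = h₀ z

/-- A topologically regular mapping: nearby fibers are `ε`-homeomorphic. -/
def TopologicallyRegular {X Y : Type*} [MetricSpace X] [MetricSpace Y] (f : X → Y) : Prop :=
  ∀ ε > (0 : ℝ), ∀ y : Y, ∃ δ > (0 : ℝ), ∀ y' : Y, dist y y' < δ →
    ∃ h : (f ⁻¹' {y} : Set X) ≃ₜ (f ⁻¹' {y'} : Set X),
      ∀ x : (f ⁻¹' {y} : Set X), dist (x : X) ((h x : X)) < ε

/-- A space is locally 0-connected: any neighborhood `V` of a point contains a neighborhood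
`W` such that any two points of `W` can be joined by a path in `V`. -/
def LocallyZeroConnected (Z : Type*) [TopologicalSpace Z] : Prop :=
  ∀ z : Z, ∀ V ∈ 𝓝 z, ∃ W ∈ 𝓝 z, ∀ a ∈ W, ∀ b ∈ W, JoinedIn V a b


/-!
Shrinking `V` repeatedly by `LC^n` gives neighbourhoods `W 0 ⊆ W 1 ⊆ ⋯ ⊆ W n = V` of `x` such
that every map `S^k → W k` is null-homotopic in `W (k + 1)`. A map from a subcomplex `A ⊆ M` into
`W 0` is extended over the remaining simplices of `M`, each after all of its proper faces: a vertex
goes to a point of `W 0`, and a simplex with `k + 2` vertices, whose boundary `≅ S^k` already lands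
in `W k`, is filled inside `W (k + 1)` by coning off a null-homotopy. The simplex is identified
with the ball `D^(k+1)` through an affine chart of its span followed by a homeomorphism taking
the simplex onto the ball and its boundary onto the sphere.
-/

section SimplexBoundary

variable {E : Type*} [AddCommGroup E] [Module ℝ E]

def simplexBoundary (t : Finset E) : Set E :=
  ⋃ (t' : Finset E) (_ : t' ⊂ t), convexHull ℝ (t' : Set E)

lemma mem_simplexBoundary {t : Finset E} {z : E} :
    z ∈ simplexBoundary t ↔ ∃ t' ⊂ t, z ∈ convexHull ℝ (t' : Set E) := by
  simp [simplexBoundary]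

lemma simplexBoundary_subset_convexHull (t : Finset E) :
    simplexBoundary t ⊆ convexHull ℝ (t : Set E) := by
  intro z hz
  obtain ⟨t', ht', hz⟩ := mem_simplexBoundary.1 hz
  exact convexHull_mono (Finset.coe_subset.2 ht'.subset) hz

lemma simplexBoundary_eq_empty_of_card_le_one {t : Finset E} (ht : t.card ≤ 1) :
    simplexBoundary t = ∅ := by
  refine Set.eq_empty_of_forall_notMem fun z hz ↦ ?_
  obtain ⟨t', ht', hz⟩ := mem_simplexBoundary.1 hz
  have : t' = ∅ := Finset.card_eq_zero.1 (by have := Finset.card_lt_card ht'; omega)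
  simp [this] at hz

lemma image_simplexBoundary {F : Type*} [AddCommGroup F] [Module ℝ F] [DecidableEq F]
    {f : E →ᵃ[ℝ] F} (hf : Function.Injective f) (t : Finset E) :
    f '' simplexBoundary t = simplexBoundary (t.image f) := by
  ext z
  simp only [simplexBoundary, Set.image_iUnion₂, Set.mem_iUnion₂, f.image_convexHull]
  constructor
  · rintro ⟨t', ht', hz⟩
    exact ⟨t'.image f, (Finset.image_ssubset_image hf).2 ht', by rwa [Finset.coe_image]⟩
  · rintro ⟨s, hs, hz⟩
    obtain ⟨t', ht', rfl⟩ := Finset.subset_image_iff.1 hs.subset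
    refine ⟨t', ht'.ssubset_of_ne ?_, by rwa [Finset.coe_image] at hz⟩
    rintro rfl
    exact hs.ne rfl

end SimplexBoundary

section Frontier

variable {F : Type*} [NormedAddCommGroup F] [NormedSpace ℝ F]

lemma AffineBasis.coord_eq_zero_of_mem_convexHull {ι : Type*} (b : AffineBasis ι ℝ F) {S : Set F}
    (hS : S ⊆ Set.range b) {i : ι} (hi : b i ∉ S) {x : F} (hx : x ∈ convexHull ℝ S) :
    b.coord i x = 0 := by
  refine convexHull_min (fun v hv ↦ ?_) ((convex_singleton 0).affine_preimage (b.coord i)) hx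
  obtain ⟨j, rfl⟩ := hS hv
  exact b.coord_apply_ne (by rintro rfl; exact hi hv)

lemma AffineBasis.mem_convexHull_diff_of_coord_eq_zero {ι : Type*} [Fintype ι]
    (b : AffineBasis ι ℝ F) {x : F} (hx : x ∈ convexHull ℝ (Set.range b)) {i : ι}
    (hi : b.coord i x = 0) : x ∈ convexHull ℝ (Set.range b \ {b i}) := by
  classical
  rw [b.convexHull_eq_nonneg_coord] at hx
  have hsum : ∑ j ∈ Finset.univ.erase i, b.coord j x = 1 := by
    rw [Finset.sum_erase (f := fun j ↦ b.coord j x) _ hi, b.sum_coord_apply_eq_one]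
  rw [← b.linear_combination_coord_eq_self x,
    ← Finset.sum_erase (f := fun j ↦ b.coord j x • b j) (a := i) _ (by simp [hi])]
  refine (convex_convexHull ℝ _).sum_mem (fun j _ ↦ hx j) hsum fun j hj ↦ subset_convexHull ℝ _ ?_
  exact ⟨⟨j, rfl⟩, fun h ↦ (Finset.ne_of_mem_erase hj) (b.ind.injective h)⟩

lemma frontier_convexHull_eq_simplexBoundary [FiniteDimensional ℝ F] {u : Finset F}
    (hu : AffineIndependent ℝ ((↑) : u → F)) (hspan : affineSpan ℝ (u : Set F) = ⊤) :
    frontier (convexHull ℝ (u : Set F)) = simplexBoundary u := by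
  classical
  let b : AffineBasis u ℝ F := ⟨(↑), hu, by rwa [Subtype.range_coe]⟩
  have hb : Set.range b = u := Subtype.range_coe
  rw [(u.finite_toSet.isClosed_convexHull ℝ).frontier_eq, ← hb, b.interior_convexHull]
  ext x
  simp only [Set.mem_sdiff, Set.mem_ofPred_eq, not_forall, not_lt, mem_simplexBoundary]
  constructor
  · rintro ⟨hx, i, hi⟩
    have hi0 : b.coord i x = 0 := le_antisymm hi ((b.convexHull_eq_nonneg_coord ▸ hx) i)
    refine ⟨u.erase i, Finset.erase_ssubset i.2, ?_⟩
    rw [Finset.coe_erase, ← hb]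
    exact b.mem_convexHull_diff_of_coord_eq_zero hx hi0
  · rintro ⟨t', ht', hx⟩
    obtain ⟨y, hyu, hyt'⟩ := Finset.exists_of_ssubset ht'
    have htb : (t' : Set F) ⊆ Set.range b := hb ▸ Finset.coe_subset.2 ht'.subset
    refine ⟨convexHull_mono htb hx, ⟨y, hyu⟩, ?_⟩
    exact (b.coord_eq_zero_of_mem_convexHull htb hyt' hx).le

lemma exists_homeomorph_convexHull_eq_closedBall [FiniteDimensional ℝ F] [Nontrivial F]
    {u : Finset F} (hu : AffineIndependent ℝ ((↑) : u → F))
    (hspan : affineSpan ℝ (u : Set F) = ⊤) :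
    ∃ e : F ≃ₜ F, e '' convexHull ℝ (u : Set F) = closedBall 0 1 ∧
      e '' simplexBoundary u = sphere 0 1 := by
  have hclosed := u.finite_toSet.isClosed_convexHull ℝ
  obtain ⟨e, -, hcl, hfr⟩ := exists_homeomorph_image_eq (convex_convexHull ℝ _)
    (interior_convexHull_nonempty_iff_affineSpan_eq_top.2 hspan)
    ((NormedSpace.isVonNBounded_iff ℝ).2 (isBounded_convexHull.2 u.finite_toSet.isBounded))
    (convex_closedBall 0 1) (by simp [interior_closedBall _ one_ne_zero])
    ((NormedSpace.isVonNBounded_iff ℝ).2 isBounded_closedBall)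
  refine ⟨e, ?_, ?_⟩
  · rwa [hclosed.closure_eq, closure_closedBall] at hcl
  · rwa [frontier_convexHull_eq_simplexBoundary hu hspan, frontier_closedBall _ one_ne_zero] at hfr

end Frontier

section AffineEmbedding

lemma exists_affineMap_leftInverse_of_finrank_eq {k E F : Type*} [Field k] [AddCommGroup E]
    [Module k E] [AddCommGroup F] [Module k F] [FiniteDimensional k E] [FiniteDimensional k F]
    {s : Set E} (hs : s.Nonempty) (hF : Module.finrank k F = Module.finrank k (vectorSpan k s)) :
    ∃ (j : F →ᵃ[k] E) (q : E →ᵃ[k] F), Function.LeftInverse q j ∧ s ⊆ Set.range j := by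
  obtain ⟨b₀, hb₀⟩ := hs
  let ℓ : F ≃ₗ[k] vectorSpan k s := LinearEquiv.ofFinrankEq _ _ hF
  let jl : F →ₗ[k] E := (vectorSpan k s).subtype ∘ₗ ℓ.toLinearMap
  obtain ⟨ql, hql⟩ := jl.exists_leftInverse_of_injective
    (LinearMap.ker_eq_bot.2 (Subtype.val_injective.comp ℓ.injective))
  refine ⟨jl.toAffineMap + AffineMap.const k F b₀, ql.toAffineMap - AffineMap.const k E (ql b₀),
    fun v ↦ ?_, fun b hb ↦ ?_⟩
  · simpa using LinearMap.congr_fun hql v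
  · obtain ⟨v, hv⟩ := ℓ.surjective ⟨b -ᵥ b₀, vsub_mem_vectorSpan k hb hb₀⟩
    exact ⟨v, by simp [jl, hv]⟩

variable {E F : Type*} [NormedAddCommGroup E] [NormedSpace ℝ E] [FiniteDimensional ℝ E]
  [NormedAddCommGroup F] [NormedSpace ℝ F] [FiniteDimensional ℝ F]

lemma exists_maps_simplex_closedBall [Nontrivial F] {t : Finset E}
    (ht : AffineIndependent ℝ ((↑) : t → E)) (hcard : t.card = Module.finrank ℝ F + 1) :
    ∃ (p : E → F) (s : F → E), Continuous p ∧ Continuous s ∧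
      MapsTo p (convexHull ℝ (t : Set E)) (closedBall 0 1) ∧
      MapsTo p (simplexBoundary t) (sphere 0 1) ∧
      MapsTo s (sphere 0 1) (simplexBoundary t) ∧ ∀ z ∈ simplexBoundary t, s (p z) = z := by
  classical
  have : Nonempty t := (Finset.card_pos.1 (by omega)).coe_sort
  obtain ⟨j, q, hqj, htj⟩ := exists_affineMap_leftInverse_of_finrank_eq (Set.range_nonempty _)
    (ht.finrank_vectorSpan (by simpa using hcard)).symm
  have hjq : ∀ a ∈ t, j (q a) = a := by
    intro a ha
    obtain ⟨v, hv : j v = a⟩ := htj ⟨⟨a, ha⟩, rfl⟩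
    rw [← hv, hqj v]
  set u := t.image q
  have hju : u.image j = t := by
    rw [Finset.image_image]
    exact (Finset.image_congr hjq).trans t.image_id
  have hind : AffineIndependent ℝ (q ∘ ((↑) : t → E)) := by
    have : j ∘ q ∘ ((↑) : t → E) = (↑) := funext fun a ↦ hjq a a.2
    exact AffineIndependent.of_comp j (by rw [this]; exact ht)
  have hu : AffineIndependent ℝ (Subtype.val : ↥(u : Set F) → F) := by
    have h : Set.range (q ∘ ((↑) : t → E)) = (u : Set F) := by simp [u, Set.range_comp]
    rw [← h]
    exact hind.range
  have hucard : u.card = t.card := Finset.card_image_of_injOn fun a ha b hb hab ↦ by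
    rw [← hjq a ha, ← hjq b hb, hab]
  obtain ⟨e, hecl, hefr⟩ := exists_homeomorph_convexHull_eq_closedBall hu
    (by simpa using hu.affineSpan_eq_top_iff_card_eq_finrank_add_one.2 (by simp [hucard, hcard]))
  have hhull : convexHull ℝ (t : Set E) = j '' convexHull ℝ (u : Set F) := by
    rw [j.image_convexHull, ← Finset.coe_image, hju]
  have hbd : simplexBoundary t = j '' simplexBoundary u := by
    rw [image_simplexBoundary hqj.injective, hju]
  refine ⟨e ∘ q, j ∘ e.symm, e.continuous.comp q.continuous_of_finiteDimensional,
    j.continuous_of_finiteDimensional.comp e.symm.continuous, ?_, ?_, ?_, ?_⟩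
  · rw [hhull, ← hecl]
    rintro _ ⟨w, hw, rfl⟩
    exact ⟨w, hw, by simp [hqj w]⟩
  · rw [hbd, ← hefr]
    rintro _ ⟨w, hw, rfl⟩
    exact ⟨w, hw, by simp [hqj w]⟩
  · rw [hbd, ← hefr]
    rintro _ ⟨w, hw, rfl⟩
    exact ⟨w, hw, by simp⟩
  · rw [hbd]
    rintro _ ⟨w, -, rfl⟩
    simp [hqj w]

end AffineEmbedding

section Cone

variable {k : ℕ}

lemma norm_one_sub_smul_nsphere (t : unitInterval) (v : NSphere k) :
    ‖(1 - (t : ℝ)) • (v : EuclideanSpace ℝ (Fin (k + 1)))‖ = 1 - t := by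
  rw [norm_smul, mem_sphere_zero_iff_norm.1 v.2, mul_one, Real.norm_eq_abs,
    abs_of_nonneg (sub_nonneg.2 t.2.2)]

def coneMap (k : ℕ) :
    C(unitInterval × NSphere k, closedBall (0 : EuclideanSpace ℝ (Fin (k + 1))) 1) where
  toFun p := ⟨(1 - (p.1 : ℝ)) • (p.2 : EuclideanSpace ℝ (Fin (k + 1))), by
    rw [mem_closedBall_zero_iff, norm_one_sub_smul_nsphere]
    linarith [p.1.2.1]⟩
  continuous_toFun := ((continuous_const.sub (continuous_subtype_val.comp continuous_fst)).smul
    (continuous_subtype_val.comp continuous_snd)).subtype_mk _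

@[simp]
lemma coneMap_apply (p : unitInterval × NSphere k) :
    (coneMap k p : EuclideanSpace ℝ (Fin (k + 1))) = (1 - (p.1 : ℝ)) • (p.2 : _) :=
  rfl

lemma coneMap_surjective : Function.Surjective (coneMap k) := by
  rintro ⟨z, hz⟩
  rw [mem_closedBall_zero_iff] at hz
  rcases eq_or_ne z 0 with rfl | hz0
  · obtain ⟨v, hv⟩ := (NormedSpace.sphere_nonempty (x := (0 : EuclideanSpace ℝ (Fin (k + 1))))
      (r := 1)).2 zero_le_one
    exact ⟨(1, ⟨v, hv⟩), by ext1; simp⟩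
  · have hn : ‖z‖ ≠ 0 := norm_ne_zero_iff.2 hz0
    refine ⟨(⟨1 - ‖z‖, by simp [hz], by simp⟩, ⟨‖z‖⁻¹ • z, ?_⟩), ?_⟩
    · simp [norm_smul, hn]
    · ext1
      simp [smul_smul, hn]

lemma isQuotientMap_coneMap : Topology.IsQuotientMap (coneMap k) :=
  (coneMap k).continuous.isClosedMap.isQuotientMap (coneMap k).continuous coneMap_surjective

lemma coneMap_eq_coneMap {a b : unitInterval × NSphere k} (h : coneMap k a = coneMap k b) :
    a = b ∨ (a.1 = 1 ∧ b.1 = 1) := by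
  have h' := congrArg Subtype.val h
  rw [coneMap_apply, coneMap_apply] at h'
  have h1 : a.1 = b.1 := by
    have := congrArg norm h'
    rw [norm_one_sub_smul_nsphere, norm_one_sub_smul_nsphere] at this
    exact Subtype.ext (by linarith)
  by_cases ha : a.1 = 1
  · exact Or.inr ⟨ha, h1 ▸ ha⟩
  · refine Or.inl (Prod.ext h1 (Subtype.ext ?_))
    have hne : (1 - (a.1 : ℝ)) ≠ 0 := sub_ne_zero.2 fun h ↦ ha (Subtype.ext h.symm)
    rw [h1] at h' hne
    exact smul_right_injective _ hne h'

/-- A null-homotopy of `f` is constant on the fibres of the quotient map `coneMap k`, so it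
descends to an extension of `f` over the ball. -/
lemma AsphericPair.exists_extension_closedBall {X : Type*} [TopologicalSpace X] {W U : Set X}
    (h : AsphericPair k W U) (f : C(NSphere k, X)) (hf : ∀ z, f z ∈ W) :
    ∃ G : EuclideanSpace ℝ (Fin (k + 1)) → X, ContinuousOn G (closedBall 0 1) ∧
      MapsTo G (closedBall 0 1) U ∧ ∀ z : NSphere k, G z = f z := by
  obtain ⟨y₀, -, H, hH⟩ := h f hf
  have hfac : Function.FactorsThrough H.toContinuousMap (coneMap k) := by
    intro a b hab
    rcases coneMap_eq_coneMap hab with rfl | ⟨ha, hb⟩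
    · rfl
    · change H (a.1, a.2) = H (b.1, b.2)
      rw [ha, hb, H.apply_one, H.apply_one]
      rfl
  set G₀ := isQuotientMap_coneMap.lift H.toContinuousMap hfac
  have hG₀ (p) : G₀ (coneMap k p) = H p :=
    DFunLike.congr_fun (isQuotientMap_coneMap.lift_comp _ hfac) p
  have hext (z : closedBall (0 : EuclideanSpace ℝ (Fin (k + 1))) 1) :
      Function.extend Subtype.val G₀ (fun _ ↦ y₀) z = G₀ z :=
    Subtype.val_injective.extend_apply _ _ z
  refine ⟨Function.extend Subtype.val G₀ (fun _ ↦ y₀), ?_, fun z hz ↦ ?_, fun z ↦ ?_⟩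
  · rw [continuousOn_iff_continuous_domRestrict]
    exact G₀.continuous.congr fun z ↦ (hext z).symm
  · obtain ⟨p, hp⟩ := coneMap_surjective ⟨z, hz⟩
    rw [hext ⟨z, hz⟩, ← hp, hG₀]
    exact hH p
  · have hz : coneMap k (0, z) = ⟨z, sphere_subset_closedBall z.2⟩ := by ext1; simp
    rw [hext ⟨z, sphere_subset_closedBall z.2⟩, ← hz, hG₀]
    simp

end Cone

section HullUnion

variable {E : Type*} [NormedAddCommGroup E] [NormedSpace ℝ E]

def hullUnion (S : Finset (Finset E)) : Set E :=
  ⋃ s ∈ S, convexHull ℝ (s : Set E)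

lemma mem_hullUnion {S : Finset (Finset E)} {z : E} :
    z ∈ hullUnion S ↔ ∃ s ∈ S, z ∈ convexHull ℝ (s : Set E) := by
  simp [hullUnion]

lemma isClosed_hullUnion (S : Finset (Finset E)) : IsClosed (hullUnion S) :=
  S.finite_toSet.isClosed_biUnion fun s _ ↦ s.finite_toSet.isClosed_convexHull ℝ

lemma hullUnion_insert [DecidableEq E] (t : Finset E) (S : Finset (Finset E)) :
    hullUnion (insert t S) = convexHull ℝ (t : Set E) ∪ hullUnion S :=
  Finset.set_biUnion_insert _ _ _

lemma convexHull_inter_hullUnion {M : Geometry.SimplicialComplex ℝ E} {S : Finset (Finset E)}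
    (hSM : ↑S ⊆ M.faces) (hS : IsRelLowerSet (S : Set (Finset E)) Finset.Nonempty)
    {t : Finset E} (htM : t ∈ M.faces) (htS : t ∉ S)
    (hbd : ∀ t' ⊂ t, t'.Nonempty → t' ∈ S) :
    convexHull ℝ (t : Set E) ∩ hullUnion S = simplexBoundary t := by
  classical
  ext z
  constructor
  · rintro ⟨hzt, hzS⟩
    obtain ⟨s, hs, hzs⟩ := mem_hullUnion.1 hzS
    refine mem_simplexBoundary.2 ⟨t ∩ s, Finset.inter_subset_left.ssubset_of_ne fun h ↦ htS ?_, ?_⟩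
    · exact hS.mem_of_le hs (Finset.inter_eq_left.1 h) (M.nonempty_of_mem_faces htM)
    · rw [Finset.coe_inter]
      exact M.inter_subset_convexHull htM (hSM hs) ⟨hzt, hzs⟩
  · intro hz
    obtain ⟨t', ht', hzt'⟩ := mem_simplexBoundary.1 hz
    have hne : t'.Nonempty := Finset.coe_nonempty.1 (convexHull_nonempty_iff.1 ⟨z, hzt'⟩)
    exact ⟨simplexBoundary_subset_convexHull t hz, mem_hullUnion.2 ⟨t', hbd t' ht' hne, hzt'⟩⟩

lemma exists_mem_notMem_isRelLowerSet_erase [DecidableEq E] {A : Geometry.SimplicialComplex ℝ E}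
    {S : Finset (Finset E)} (hS : IsRelLowerSet (S : Set (Finset E)) Finset.Nonempty)
    (hSA : ¬ ↑S ⊆ A.faces) :
    ∃ t ∈ S, t ∉ A.faces ∧ IsRelLowerSet (S.erase t : Set (Finset E)) Finset.Nonempty := by
  classical
  obtain ⟨t₁, ht₁S, ht₁A⟩ := Set.not_subset.1 hSA
  obtain ⟨t, ht, hmax⟩ := (S.filter (· ∉ A.faces)).exists_max_image Finset.card
    ⟨t₁, Finset.mem_filter.2 ⟨ht₁S, ht₁A⟩⟩
  obtain ⟨htS, htA⟩ := Finset.mem_filter.1 ht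
  refine ⟨t, htS, htA, fun s hs ↦ ?_⟩
  obtain ⟨hst, hsS⟩ := Finset.mem_erase.1 hs
  refine ⟨hS.prop_of_mem hsS, fun r hrs hr ↦ Finset.mem_erase.2 ⟨?_, hS.mem_of_le hsS hrs hr⟩⟩
  rintro rfl
  have hsA : s ∉ A.faces := fun h ↦ htA (A.down_closed h hrs hr)
  have := Finset.card_lt_card (hrs.ssubset_of_ne (Ne.symm hst))
  have := hmax s (Finset.mem_filter.2 ⟨hsS, hsA⟩)
  omega

end HullUnion

section Extension

variable {E : Type*} [NormedAddCommGroup E] [NormedSpace ℝ E] [FiniteDimensional ℝ E]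
  {X : Type*} [TopologicalSpace X]

lemma AsphericPair.exists_extension_simplex {c : ℕ} {W U : Set X} (hpair : AsphericPair c W U)
    {t : Finset E} (ht : AffineIndependent ℝ ((↑) : t → E)) (hcard : t.card = c + 2) {φ : E → X}
    (hφ : ContinuousOn φ (simplexBoundary t)) (hφW : MapsTo φ (simplexBoundary t) W) :
    ∃ ψ : E → X, ContinuousOn ψ (convexHull ℝ (t : Set E)) ∧
      MapsTo ψ (convexHull ℝ (t : Set E)) U ∧ EqOn ψ φ (simplexBoundary t) := by
  obtain ⟨p, s, hp, hs, hpB, hpS, hsS, hsp⟩ :=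
    exists_maps_simplex_closedBall (F := EuclideanSpace ℝ (Fin (c + 1))) ht (by simp [hcard])
  let f : C(NSphere c, X) :=
    ⟨fun v ↦ φ (s v), hφ.comp_continuous (hs.comp continuous_subtype_val) fun v ↦ hsS v.2⟩
  obtain ⟨G, hG, hGU, hGf⟩ := hpair.exists_extension_closedBall f fun v ↦ hφW (hsS v.2)
  refine ⟨G ∘ p, hG.comp hp.continuousOn hpB, hGU.comp hpB, fun z hz ↦ ?_⟩
  simpa [f, hsp z hz] using hGf ⟨p z, hpS hz⟩

variable {n : ℕ} {W : ℕ → Set X}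

lemma exists_extension_convexHull (hW : Monotone W)
    (hpair : ∀ k < n, AsphericPair k (W k) (W (k + 1))) (hW0 : (W 0).Nonempty) {t : Finset E}
    (ht : AffineIndependent ℝ ((↑) : t → E)) (htn : t.card ≤ n + 1) {φ : E → X}
    (hφ : ContinuousOn φ (simplexBoundary t))
    (hφW : MapsTo φ (simplexBoundary t) (W (t.card - 2))) :
    ∃ ψ : E → X, ContinuousOn ψ (convexHull ℝ (t : Set E)) ∧
      MapsTo ψ (convexHull ℝ (t : Set E)) (W (t.card - 1)) ∧ EqOn ψ φ (simplexBoundary t) := by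
  rcases Nat.lt_or_ge t.card 2 with ht1 | ht2
  · obtain ⟨x₀, hx₀⟩ := hW0
    refine ⟨fun _ ↦ x₀, continuousOn_const, fun _ _ ↦ hW (Nat.zero_le _) hx₀, ?_⟩
    rw [simplexBoundary_eq_empty_of_card_le_one (by omega)]
    exact eqOn_empty _ _
  · obtain ⟨c, hc⟩ : ∃ c, t.card = c + 2 := ⟨t.card - 2, by omega⟩
    rw [hc, Nat.add_sub_cancel] at hφW
    rw [hc]
    exact (hpair c (by omega)).exists_extension_simplex ht hc hφ hφW

lemma exists_extension_insert [DecidableEq E] (hW : Monotone W)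
    (hpair : ∀ k < n, AsphericPair k (W k) (W (k + 1))) (hW0 : (W 0).Nonempty)
    {M : Geometry.SimplicialComplex ℝ E} (hdim : ∀ s ∈ M.faces, s.card ≤ n + 1)
    {S : Finset (Finset E)} (hSM : ↑S ⊆ M.faces)
    (hS : IsRelLowerSet (S : Set (Finset E)) Finset.Nonempty) {t : Finset E} (htM : t ∈ M.faces)
    (htS : t ∉ S) (hbd : ∀ t' ⊂ t, t'.Nonempty → t' ∈ S) {φ : E → X}
    (hφ : ContinuousOn φ (hullUnion S))
    (hφW : ∀ s ∈ S, MapsTo φ (convexHull ℝ (s : Set E)) (W (s.card - 1))) :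
    ∃ φ' : E → X, ContinuousOn φ' (hullUnion (insert t S)) ∧
      (∀ s ∈ insert t S, MapsTo φ' (convexHull ℝ (s : Set E)) (W (s.card - 1))) ∧
      EqOn φ' φ (hullUnion S) := by
  classical
  have hinter := convexHull_inter_hullUnion hSM hS htM htS hbd
  have hφbd : MapsTo φ (simplexBoundary t) (W (t.card - 2)) := by
    intro z hz
    obtain ⟨t', ht', hzt'⟩ := mem_simplexBoundary.1 hz
    have hne : t'.Nonempty := Finset.coe_nonempty.1 (convexHull_nonempty_iff.1 ⟨z, hzt'⟩)
    exact hW (by have := Finset.card_lt_card ht'; omega) (hφW t' (hbd t' ht' hne) hzt')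
  obtain ⟨ψ, hψ, hψW, hψφ⟩ := exists_extension_convexHull hW hpair hW0 (M.indep htM)
    (hdim t htM) (hφ.mono (hinter ▸ inter_subset_right)) hφbd
  have hφ' : EqOn ((hullUnion S).piecewise φ ψ) φ (hullUnion S) := piecewise_eqOn _ _ _
  have hψ' : EqOn ((hullUnion S).piecewise φ ψ) ψ (convexHull ℝ (t : Set E)) := fun z hz ↦ by
    by_cases h : z ∈ hullUnion S
    · rw [piecewise_eq_of_mem _ _ _ h]
      exact (hψφ (hinter ▸ ⟨hz, h⟩)).symm
    · exact piecewise_eq_of_notMem _ _ _ h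
  refine ⟨(hullUnion S).piecewise φ ψ, ?_, fun s hs ↦ ?_, hφ'⟩
  · rw [hullUnion_insert]
    exact (hψ.congr hψ').union_of_isClosed (hφ.congr hφ')
      (t.finite_toSet.isClosed_convexHull ℝ) (isClosed_hullUnion S)
  · rcases Finset.mem_insert.1 hs with rfl | hs
    · exact hψW.congr hψ'.symm
    · exact (hφW s hs).congr (hφ'.mono (subset_biUnion_of_mem hs)).symm

lemma exists_extension_of_faces_subset (hW : Monotone W)
    (hpair : ∀ k < n, AsphericPair k (W k) (W (k + 1))) (hW0 : (W 0).Nonempty)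
    {M A : Geometry.SimplicialComplex ℝ E} (hdim : ∀ s ∈ M.faces, s.card ≤ n + 1)
    (f : C(A.space, X)) (hf : ∀ a, f a ∈ W 0) (S : Finset (Finset E)) (hSM : ↑S ⊆ M.faces)
    (hS : IsRelLowerSet (S : Set (Finset E)) Finset.Nonempty) (hAS : A.faces ⊆ ↑S) :
    ∃ φ : E → X, ContinuousOn φ (hullUnion S) ∧
      (∀ s ∈ S, MapsTo φ (convexHull ℝ (s : Set E)) (W (s.card - 1))) ∧
      ∀ z (hz : z ∈ A.space), φ z = f ⟨z, hz⟩ := by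
  classical
  induction S using Finset.strongInduction with
  | H S ih =>
  by_cases hSA : ↑S ⊆ A.faces
  · obtain ⟨x₀, -⟩ := hW0
    have hSsp : hullUnion S ⊆ A.space := biUnion_subset_biUnion_left hSA
    refine ⟨fun z ↦ if hz : z ∈ A.space then f ⟨z, hz⟩ else x₀, ?_, fun s hs z hz ↦ ?_,
      fun z hz ↦ dif_pos hz⟩
    · refine ContinuousOn.mono ?_ hSsp
      rw [continuousOn_iff_continuous_domRestrict]
      exact f.continuous.congr fun z ↦ by simp
    · have hzA : z ∈ A.space := hSsp (mem_hullUnion.2 ⟨s, hs, hz⟩)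
      simpa [hzA] using hW (Nat.zero_le _) (hf ⟨z, hzA⟩)
  · obtain ⟨t, htS, htA, hlow⟩ := exists_mem_notMem_isRelLowerSet_erase hS hSA
    have hAS' : A.faces ⊆ ↑(S.erase t) := fun a ha ↦
      Finset.mem_erase.2 ⟨by rintro rfl; exact htA ha, hAS ha⟩
    obtain ⟨φ, hφ, hφW, hφf⟩ := ih _ (Finset.erase_ssubset htS)
      ((Finset.coe_subset.2 (S.erase_subset t)).trans hSM) hlow hAS'
    obtain ⟨φ', hφ', hφ'W, hφ'φ⟩ := exists_extension_insert hW hpair hW0 hdim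
      ((Finset.coe_subset.2 (S.erase_subset t)).trans hSM) hlow (hSM htS)
      (Finset.notMem_erase t S)
      (fun t' ht' hne ↦ Finset.mem_erase.2 ⟨ht'.ne, hS.mem_of_le htS ht'.subset hne⟩) hφ hφW
    rw [Finset.insert_erase htS] at hφ' hφ'W
    refine ⟨φ', hφ', hφ'W, fun z hz ↦ ?_⟩
    rw [hφ'φ (biUnion_subset_biUnion_left hAS' hz), hφf]

lemma polyConnPair_of_monotone (hW : Monotone W) (hW0 : (W 0).Nonempty)
    (hpair : ∀ k < n, AsphericPair k (W k) (W (k + 1))) : PolyConnPair n (W 0) (W n) := by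
  intro N M A hfin hdim hA f hf
  obtain ⟨φ, hφ, hφW, hφf⟩ := exists_extension_of_faces_subset hW hpair hW0 hdim f hf
    hfin.toFinset (by simp) (by simpa using M.isRelLowerSet_faces) (by simpa using hA)
  have hM : hullUnion hfin.toFinset = M.space := by
    simp [hullUnion, Geometry.SimplicialComplex.space]
  rw [hM] at hφ
  refine ⟨⟨M.space.domRestrict φ, hφ.domRestrict⟩, fun z ↦ ?_, fun z hzA _ ↦ hφf z hzA⟩
  obtain ⟨s, hs, hzs⟩ := Geometry.SimplicialComplex.mem_space_iff.1 z.2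
  exact hW (by have := hdim s hs; omega) (hφW s (hfin.mem_toFinset.2 hs) hzs)

end Extension

lemma IsLC.exists_nhds_chain {X : Type*} [TopologicalSpace X] {n : ℕ} (hX : IsLC n X) {x : X}
    {V : Set X} (hV : V ∈ 𝓝 x) :
    ∃ D : ℕ → Set X, D 0 = V ∧ (∀ i, D i ∈ 𝓝 x) ∧ ∀ i, D (i + 1) ⊆ D i ∧
      AsphericPairUpTo n (D (i + 1)) (D i) := by
  choose W hW hWV hpair using hX x
  let D : ℕ → {s : Set X // s ∈ 𝓝 x} := fun i ↦
    Nat.rec ⟨V, hV⟩ (fun _ s ↦ ⟨W s.1 s.2, hW s.1 s.2⟩) i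
  exact ⟨fun i ↦ (D i).1, rfl, fun i ↦ (D i).2, fun i ↦ ⟨hWV _ _, hpair _ _⟩⟩

theorem LC_implies_locally_polyhedrally_connected_general
    {X : Type} [MetricSpace X]
    (n : ℕ) (hX : IsLC n X) :
    ∀ x : X, ∀ V ∈ 𝓝 x, ∃ W ∈ 𝓝 x, W ⊆ V ∧ PolyConnPair n W V := by
  intro x V hV
  obtain ⟨D, hD0, hDx, hD⟩ := hX.exists_nhds_chain hV
  have hanti : Antitone D := antitone_nat_of_succ_le fun i ↦ (hD i).1
  refine ⟨D n, hDx n, hD0 ▸ hanti (Nat.zero_le n), ?_⟩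
  have hpair : ∀ k < n, AsphericPair k (D (n - k)) (D (n - (k + 1))) := fun k hk ↦ by
    obtain ⟨i, rfl⟩ := Nat.exists_eq_add_of_lt hk
    simpa [show k + i + 1 - k = i + 1 by omega, show k + i + 1 - (k + 1) = i by omega]
      using (hD i).2.2 k (by omega)
  simpa [hD0] using polyConnPair_of_monotone (W := fun k ↦ D (n - k))
    (fun _ _ hij ↦ hanti (Nat.sub_le_sub_left hij n)) ⟨x, mem_of_mem_nhds (hDx n)⟩ hpair

/-- Any `LC^n` separable metric space `X` is locally polyhedrally `n`-connected: for every
`x ∈ X` and every neighborhood `V` of `x` there is a neighborhood `W` of `x` such that the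
pair `W ⊆ V` is polyhedrally `n`-connected. -/
theorem LC_implies_locally_polyhedrally_connected
    {X : Type} [MetricSpace X] [TopologicalSpace.SeparableSpace X]
    (n : ℕ) (hX : IsLC n X) :
    ∀ x : X, ∀ V ∈ 𝓝 x, ∃ W ∈ 𝓝 x, W ⊆ V ∧ PolyConnPair n W V :=
  LC_implies_locally_polyhedrally_connected_general n hX

end
end

section
/- Let α be a proper ordering on subsets of a metric space Y and let F: X → Y be a multivalued mapping of a compact metric space X into Y which is equi locally of type α and contains a compact submapping Ψ: X → Y. Then for every ε > 0 there exists δ > 0 such that for every point (x,y) in the open δ-neighborhood O(Γ_Ψ, δ) of the graph of Ψ in X×Y one has (O(y,δ) ∩ F(x)) α (O(y,ε) ∩ F(x)). -/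
open Set Metric Topology Filter
open scoped ENNReal

noncomputable section

/-! The graph of the compact submapping `Ψ` is compact. At each of its points `(x₀, y₀)` the
equi-local property supplies an open box `U × W` with `W ⊆ O(y₀, ε/2)` on which `α` holds,
and half a Lebesgue number of the resulting cover of the graph serves as `δ`: a point `(x, y)`
that is `δ`-close to the graph has `x ∈ U` and `O(y, δ) ⊆ W` for one of the boxes, while
`O(y₀, ε/2) ⊆ O(y, ε)` because `y ∈ W`. -/

theorem ProperOrdering.mono {Y : Type*} {α : Set Y → Set Y → Prop} (hα : ProperOrdering α)
    {W W' V V' : Set Y} (hW : W' ⊆ W) (hV : V ⊆ V') (h : α W V) : α W' V' :=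
  hα.2.2 _ _ _ (hα.2.1 _ _ _ hW h) hV

section SetMap

variable {X Y : Type*} [TopologicalSpace X] [TopologicalSpace Y] {Ψ : X → Set Y}

theorem CompactSetMap.isClosed_graphOf [T2Space Y] (h : CompactSetMap Ψ) :
    IsClosed (graphOf Ψ) := by
  refine isOpen_compl_iff.1 (isOpen_iff_mem_nhds.2 ?_)
  rintro ⟨x, y⟩ (hy : y ∉ Ψ x)
  obtain ⟨V, hV, W, hW, hVW⟩ := Filter.disjoint_iff.1 ((h.2 x).disjoint_nhdsSet_nhds hy)
  obtain ⟨V', hV'o, hΨV', hV'V⟩ := mem_nhdsSet_iff_exists.1 hV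
  filter_upwards [prod_mem_nhds ((h.1 V' hV'o).mem_nhds hΨV') hW]
  rintro ⟨x', y'⟩ ⟨hx', hy'⟩ (hmem : y' ∈ Ψ x')
  exact hVW.ne_of_mem (hV'V (hx' hmem)) hy' rfl

theorem UscSetMap.isCompact_iUnion [CompactSpace X] (h : UscSetMap Ψ)
    (hc : ∀ x, IsCompact (Ψ x)) : IsCompact (⋃ x, Ψ x) := by
  classical
  refine isCompact_iff_finite_subcover.2 fun U hUo hcov => ?_
  have hfin : ∀ x, ∃ t : Finset _, Ψ x ⊆ ⋃ i ∈ t, U i := fun x =>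
    (hc x).elim_finite_subcover U hUo ((subset_iUnion Ψ x).trans hcov)
  choose t ht using hfin
  obtain ⟨s, hs⟩ := isCompact_univ.elim_finite_subcover
    (fun x => {x' | Ψ x' ⊆ ⋃ i ∈ t x, U i}) (fun x => h _ (isOpen_biUnion fun i _ => hUo i))
    (fun x _ => mem_iUnion.2 ⟨x, ht x⟩)
  refine ⟨s.biUnion t, iUnion_subset fun x y hy => ?_⟩
  obtain ⟨x₀, hx₀s, hx₀⟩ := mem_iUnion₂.1 (hs (mem_univ x))
  obtain ⟨i, hit, hiy⟩ := mem_iUnion₂.1 (hx₀ hy)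
  exact mem_iUnion₂.2 ⟨i, Finset.mem_biUnion.2 ⟨x₀, hx₀s, hit⟩, hiy⟩

theorem CompactSetMap.isCompact_graphOf [CompactSpace X] [T2Space Y] (h : CompactSetMap Ψ) :
    IsCompact (graphOf Ψ) := by
  refine (isCompact_univ.prod (h.1.isCompact_iUnion h.2)).of_isClosed_subset
    h.isClosed_graphOf fun p hp => ⟨mem_univ _, mem_iUnion.2 ⟨p.1, hp⟩⟩

end SetMap

namespace EquiLocallyOfType

theorem exists_isOpen_prod {X Y : Type*} [TopologicalSpace X] [TopologicalSpace Y]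
    {α : Set Y → Set Y → Prop} (hα : ProperOrdering α) {F : X → Set Y}
    (hF : EquiLocallyOfType α F) {x : X} {y : Y} (hy : y ∈ F x) {V : Set Y} (hV : V ∈ 𝓝 y) :
    ∃ U W, IsOpen U ∧ x ∈ U ∧ IsOpen W ∧ y ∈ W ∧ W ⊆ V ∧
      ∀ x' ∈ U, α (W ∩ F x') (V ∩ F x') := by
  obtain ⟨W, hW, U, hU, hUW⟩ := hF x y hy V hV
  refine ⟨interior U, interior (W ∩ V), isOpen_interior, mem_interior_iff_mem_nhds.2 hU,
    isOpen_interior, mem_interior_iff_mem_nhds.2 (inter_mem hW hV),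
    interior_subset.trans inter_subset_right, fun x' hx' => ?_⟩
  exact hα.mono (inter_subset_inter_left _ (interior_subset.trans inter_subset_left)) subset_rfl
    (hUW x' (interior_subset hx'))

theorem exists_uniform_radius {X Y : Type*} [PseudoMetricSpace X] [PseudoMetricSpace Y]
    {α : Set Y → Set Y → Prop} (hα : ProperOrdering α) {F : X → Set Y}
    (hF : EquiLocallyOfType α F) {K : Set (X × Y)} (hK : IsCompact K) (hKF : K ⊆ graphOf F)
    {ε : ℝ} (hε : 0 < ε) :
    ∃ δ > 0, ∀ q ∈ K, ∀ x y, dist x q.1 < δ → dist y q.2 < δ →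
      α (ball y δ ∩ F x) (ball y ε ∩ F x) := by
  have hloc (p : K) := hF.exists_isOpen_prod hα (hKF p.2) (ball_mem_nhds p.1.2 (half_pos hε))
  choose U W hUo hU hWo hW hWV hUW using hloc
  obtain ⟨δ, hδ, hcover⟩ := lebesgue_number_lemma_of_metric (c := fun p => U p ×ˢ W p) hK
    (fun p => (hUo p).prod (hWo p)) (fun q hq => mem_iUnion.2 ⟨⟨q, hq⟩, hU _, hW _⟩)
  refine ⟨δ / 2, half_pos hδ, fun q hq x y hx hy => ?_⟩
  obtain ⟨p, hp⟩ := hcover q hq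
  replace hp := (ball_prod_same q.1 q.2 δ).trans_subset hp
  have hxU : x ∈ U p :=
    (hp (mk_mem_prod (mem_ball.2 (hx.trans (half_lt_self hδ))) (mem_ball_self hδ))).1
  have hyW : ball y (δ / 2) ⊆ W p := fun z hz =>
    (hp (mk_mem_prod (mem_ball_self hδ) (ball_subset_ball' (by linarith) hz))).2
  have hyε : ball p.1.2 (ε / 2) ⊆ ball y ε := ball_subset_ball' (by
    linarith [mem_ball'.1 (hWV p (hyW (mem_ball_self (half_pos hδ))))])
  exact hα.mono (inter_subset_inter_left _ hyW) (inter_subset_inter_left _ hyε) (hUW p x hxU)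

end EquiLocallyOfType

theorem equi_locally_of_type_uniformization_general
    {X Y : Type} [MetricSpace X] [CompactSpace X] [MetricSpace Y]
    (α : Set Y → Set Y → Prop) (hα : ProperOrdering α)
    (F : X → Set Y)
    (hF : EquiLocallyOfType α F)
    (Ψ : X → Set Y) (hΨsub : ∀ x, Ψ x ⊆ F x)
    (hΨ : CompactSetMap Ψ) :
    ∀ ε > (0 : ℝ), ∃ δ > (0 : ℝ), ∀ x : X, ∀ y : Y,
      (x, y) ∈ SumBall (graphOf Ψ) δ →
        α (Metric.ball y δ ∩ F x) (Metric.ball y ε ∩ F x) := by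
  intro ε hε
  obtain ⟨δ, hδ, hunif⟩ :=
    hF.exists_uniform_radius hα hΨ.isCompact_graphOf (fun p hp => hΨsub p.1 hp) hε
  refine ⟨δ, hδ, fun x y ⟨q, hq, hxy⟩ => hunif q hq x y ?_ ?_⟩
  · linarith [dist_nonneg (x := y) (y := q.2)]
  · linarith [dist_nonneg (x := x) (y := q.1)]

/-- Let `α` be a proper ordering on subsets of a metric space `Y` and let `F : X → Y` be a
multivalued mapping of a compact metric space `X` into `Y` which is equi locally of type `α`
and contains a compact submapping `Ψ`. Then for every `ε > 0` there exists `δ > 0` such that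
for every point `(x, y)` in the open `δ`-neighborhood of the graph of `Ψ` (with respect to
the sum metric on `X × Y`) one has `(O(y,δ) ∩ F x) α (O(y,ε) ∩ F x)`. -/
theorem equi_locally_of_type_uniformization
    {X Y : Type} [MetricSpace X] [CompactSpace X] [MetricSpace Y]
    (α : Set Y → Set Y → Prop) (hα : ProperOrdering α)
    (F : X → Set Y) (hne : ∀ x, (F x).Nonempty)
    (hF : EquiLocallyOfType α F)
    (Ψ : X → Set Y) (hΨne : ∀ x, (Ψ x).Nonempty) (hΨsub : ∀ x, Ψ x ⊆ F x)
    (hΨ : CompactSetMap Ψ) :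
    ∀ ε > (0 : ℝ), ∃ δ > (0 : ℝ), ∀ x : X, ∀ y : Y,
      (x, y) ∈ SumBall (graphOf Ψ) δ →
        α (Metric.ball y δ ∩ F x) (Metric.ball y ε ∩ F x) :=
  equi_locally_of_type_uniformization_general α hα F hF Ψ hΨsub hΨ

end
end

section
/- Let Z be a locally 0-connected metric space and let G_0 ⊆ G_1 be a coconnected pair of proper subsets of Z. If F_0 ⊆ G_0 is closed in Z, then the G_1-coconnectification of F_0 is also closed in Z. -/
open Set Metric Topology Filter
open scoped ENNReal

noncomputable section

/-! Local 0-connectedness makes connected components of open sets open, i.e. the space is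
locally connected. The complement of the coconnectification of a closed `F₀` is a union of
components of the open set `F₀ᶜ`, hence open. -/

theorem JoinedIn.mem_connectedComponentIn {X : Type*} [TopologicalSpace X] {F : Set X}
    {x y : X} (h : JoinedIn F x y) : y ∈ connectedComponentIn F x :=
  have hx : x ∈ F := h.source_mem
  (isPathConnected_pathComponentIn hx).isConnected.isPreconnected.subset_connectedComponentIn
    (mem_pathComponentIn_self hx) pathComponentIn_subset h

theorem LocallyZeroConnected.locallyConnectedSpace {X : Type*} [TopologicalSpace X]
    (hX : LocallyZeroConnected X) : LocallyConnectedSpace X := by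
  refine locallyConnectedSpace_iff_connectedComponentIn_open.mpr fun F hF x _ => ?_
  refine isOpen_iff_mem_nhds.mpr fun y hy => ?_
  obtain ⟨W, hW, hWjoin⟩ := hX y F (hF.mem_nhds (connectedComponentIn_subset F x hy))
  filter_upwards [hW] with w hw
  rw [connectedComponentIn_eq hy]
  exact (hWjoin y (mem_of_mem_nhds hW) w hw).mem_connectedComponentIn

theorem isClosed_coconnectification {X : Type*} [TopologicalSpace X] [LocallyConnectedSpace X]
    (G₁ : Set X) {F₀ : Set X} (hF₀ : IsClosed F₀) : IsClosed (coconnectification G₁ F₀) := by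
  refine isOpen_compl_iff.mp (isOpen_iff_forall_mem_open.mpr fun z hz => ?_)
  have hzF₀ : z ∈ F₀ᶜ := fun h => hz (Or.inl h)
  refine ⟨connectedComponentIn F₀ᶜ z, fun w hw hw' => ?_, hF₀.isOpen_compl.connectedComponentIn,
    mem_connectedComponentIn hzF₀⟩
  rcases hw' with hwF₀ | ⟨-, hwG₁⟩
  · exact connectedComponentIn_subset F₀ᶜ z hw hwF₀
  · rw [← connectedComponentIn_eq hw] at hwG₁
    exact hz (Or.inr ⟨hzF₀, hwG₁⟩)

theorem coconnectification_isClosed_general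
    {Z : Type} [MetricSpace Z] (hZ : LocallyZeroConnected Z)
    (G₁ : Set Z)
    (F₀ : Set Z) (hclosed : IsClosed F₀) :
    IsClosed (coconnectification G₁ F₀) :=
  have := hZ.locallyConnectedSpace
  isClosed_coconnectification G₁ hclosed

/-- Let `Z` be a locally 0-connected metric space and let `G₀ ⊆ G₁` be a coconnected pair of
proper subsets of `Z`. If `F₀ ⊆ G₀` is closed in `Z`, then the `G₁`-coconnectification of
`F₀` is also closed in `Z`. -/
theorem coconnectification_isClosed
    {Z : Type} [MetricSpace Z] (hZ : LocallyZeroConnected Z)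
    (G₀ G₁ : Set Z) (hG : G₀ ⊆ G₁) (hG₀proper : G₀ ≠ Set.univ) (hG₁proper : G₁ ≠ Set.univ)
    (hcocon : CoconnectedPair G₀ G₁)
    (F₀ : Set Z) (hF₀ : F₀ ⊆ G₀) (hclosed : IsClosed F₀) :
    IsClosed (coconnectification G₁ F₀) :=
  coconnectification_isClosed_general hZ G₁ F₀ hclosed

end
end

section
/- Let G_0 ⊆ G_1 be a coconnected pair of proper subsets of a space Z and let F_0 ⊆ G_0. Then the G_1-coconnectification F_1 of F_0 satisfies: F_0 ⊆ F_1 ⊆ G_1, the complement Z \ F_1 is connected and contains Z \ G_1, and F_1 is the minimal such set; that is, if F' is any subset with F_0 ⊆ F' ⊆ G_1 such that Z \ F' is connected and contains Z \ G_1, then F_1 ⊆ F'. -/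
open Set Metric Topology Filter
open scoped ENNReal

noncomputable section

/-!
The complement `Z \ G₁` lies in a single component `D` of `Z \ F₀`, and the complement of the
coconnectification is exactly `D`. Any `F' ⊇ F₀` with connected complement meeting `Z \ G₁`
has that complement inside `D`, which gives minimality.
-/

section

variable {Z : Type*} [TopologicalSpace Z]

theorem CoconnectedPair.compl_subset_connectedComponentIn {G₀ G₁ F₀ : Set Z} {z₀ : Z}
    (h : CoconnectedPair G₀ G₁) (hF₀ : F₀ ⊆ G₀) (hz₀ : z₀ ∉ G₁) :
    G₁ᶜ ⊆ connectedComponentIn F₀ᶜ z₀ := by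
  obtain ⟨C, hCG₀, hC, hG₁C⟩ := h
  exact hG₁C.trans <|
    hC.subset_connectedComponentIn (hG₁C hz₀) (hCG₀.trans (compl_subset_compl.2 hF₀))

theorem coconnectification_subset {G₁ F₀ : Set Z} (h : F₀ ⊆ G₁) :
    coconnectification G₁ F₀ ⊆ G₁ := by
  rintro z (hz | ⟨hzF₀, hzG₁⟩)
  exacts [h hz, hzG₁ (mem_connectedComponentIn hzF₀)]

theorem compl_coconnectification_eq {G₁ F₀ : Set Z} {z₀ : Z}
    (h : G₁ᶜ ⊆ connectedComponentIn F₀ᶜ z₀) (hz₀ : z₀ ∉ G₁) :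
    (coconnectification G₁ F₀)ᶜ = connectedComponentIn F₀ᶜ z₀ := by
  ext z
  simp only [coconnectification, mem_compl_iff, mem_union, mem_ofPred_eq, not_or, not_and]
  constructor
  · rintro ⟨hzF₀, hzG₁⟩
    obtain ⟨w, hwz, hwG₁⟩ := not_subset.1 (hzG₁ hzF₀)
    rw [connectedComponentIn_eq (h hwG₁), ← connectedComponentIn_eq hwz]
    exact mem_connectedComponentIn hzF₀
  · intro hz
    refine ⟨connectedComponentIn_subset _ _ hz, fun _ hzG₁ => hz₀ (hzG₁ ?_)⟩
    rw [← connectedComponentIn_eq hz]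
    exact mem_connectedComponentIn (connectedComponentIn_nonempty_iff.1 ⟨z, hz⟩)

end

theorem coconnectification_spec_general
    {Z : Type} [TopologicalSpace Z]
    (G₀ G₁ : Set Z) (hG : G₀ ⊆ G₁) (hG₁proper : G₁ ≠ Set.univ)
    (hcocon : CoconnectedPair G₀ G₁)
    (F₀ : Set Z) (hF₀ : F₀ ⊆ G₀) :
    F₀ ⊆ coconnectification G₁ F₀ ∧
    coconnectification G₁ F₀ ⊆ G₁ ∧
    IsConnected (coconnectification G₁ F₀)ᶜ ∧
    G₁ᶜ ⊆ (coconnectification G₁ F₀)ᶜ ∧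
    ∀ F' : Set Z, F₀ ⊆ F' → F' ⊆ G₁ → IsConnected F'ᶜ → G₁ᶜ ⊆ F'ᶜ →
      coconnectification G₁ F₀ ⊆ F' := by
  obtain ⟨z₀, hz₀⟩ := nonempty_compl.2 hG₁proper
  have hD := hcocon.compl_subset_connectedComponentIn hF₀ hz₀
  have hcompl := compl_coconnectification_eq (F₀ := F₀) hD hz₀
  refine ⟨subset_union_left, coconnectification_subset (hF₀.trans hG), ?_, hcompl ▸ hD, ?_⟩
  · rw [hcompl]
    exact isConnected_connectedComponentIn_iff.2 (connectedComponentIn_nonempty_iff.1 ⟨z₀, hD hz₀⟩)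
  · intro F' hF₀F' _ hF' hG₁F'
    rw [← compl_subset_compl, hcompl]
    exact hF'.isPreconnected.subset_connectedComponentIn (hG₁F' hz₀) (compl_subset_compl.2 hF₀F')

/-- Let `G₀ ⊆ G₁` be a coconnected pair of proper subsets of a space `Z` and let `F₀ ⊆ G₀`.
Then the `G₁`-coconnectification `F₁` of `F₀` satisfies: `F₀ ⊆ F₁ ⊆ G₁`, the complement
`Z \ F₁` is connected and contains `Z \ G₁`, and `F₁` is the minimal such set. -/
theorem coconnectification_spec
    {Z : Type} [TopologicalSpace Z]
    (G₀ G₁ : Set Z) (hG : G₀ ⊆ G₁) (hG₀proper : G₀ ≠ Set.univ) (hG₁proper : G₁ ≠ Set.univ)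
    (hcocon : CoconnectedPair G₀ G₁)
    (F₀ : Set Z) (hF₀ : F₀ ⊆ G₀) :
    F₀ ⊆ coconnectification G₁ F₀ ∧
    coconnectification G₁ F₀ ⊆ G₁ ∧
    IsConnected (coconnectification G₁ F₀)ᶜ ∧
    G₁ᶜ ⊆ (coconnectification G₁ F₀)ᶜ ∧
    ∀ F' : Set Z, F₀ ⊆ F' → F' ⊆ G₁ → IsConnected F'ᶜ → G₁ᶜ ⊆ F'ᶜ →
      coconnectification G₁ F₀ ⊆ F' :=
  coconnectification_spec_general G₀ G₁ hG hG₁proper hcocon F₀ hF₀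
end
end

section
/- Let F: K → Y be a compact multivalued mapping of a compact metric space K into a metric space Y, and let {Ψ_k: K → Y}_{k=1}^∞ be a sequence of compact submappings of F such that cal(Ψ_k) < 1/2^k for every k and Ψ_m(x) ⊆ O(Ψ_k(x), 3/2^k) for all m ≥ k ≥ 1 and all x ∈ K. Then for every x ∈ K the sequence of compacta {Ψ_k(x)} is Cauchy in the Hausdorff metric and converges to a single point s(x) ∈ F(x), and the resulting single-valued map s: K → Y is a continuous selection of F. -/
open Set Metric Topology Filter
open scoped ENNReal

noncomputable section

/-! Any point of `Ψ m x` and any point of `Ψ n x` with `m, n ≥ k` lie within `3/2^k` of points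
of `Ψ k x`, hence within `7/2^k` of each other. Points chosen in `Ψ k x` therefore form a Cauchy
sequence in the compactum `F x`; its limit `s x` lies within `7/2^k` of every `Ψ m x`, `m ≥ k`,
uniformly in `x`, and upper semicontinuity of `Ψ k` turns this uniform approximation into
continuity of `s`. -/

section TailsWithin

variable {Y : Type*} [MetricSpace Y]

def TailsWithin (A : ℕ → Set Y) (N : ℕ) (r : ℝ) : Prop :=
  ∀ m ≥ N, ∀ n ≥ N, ∀ a ∈ A m, ∀ b ∈ A n, dist a b ≤ r

theorem TailsWithin.mono {A : ℕ → Set Y} {N : ℕ} {r r' : ℝ} (h : TailsWithin A N r)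
    (hr : r ≤ r') : TailsWithin A N r' :=
  fun m hm n hn a ha b hb => (h m hm n hn a ha b hb).trans hr

theorem tailsWithin_of_subset_thickening {A : ℕ → Set Y} {N : ℕ} {r d : ℝ}
    (hd : ∀ a ∈ A N, ∀ b ∈ A N, dist a b ≤ d) (hA : ∀ m ≥ N, A m ⊆ thickening r (A N)) :
    TailsWithin A N (r + d + r) := by
  intro m hm n hn a ha b hb
  obtain ⟨a', ha', haa'⟩ := mem_thickening_iff.1 (hA m hm ha)
  obtain ⟨b', hb', hbb'⟩ := mem_thickening_iff.1 (hA n hn hb)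
  calc dist a b ≤ dist a a' + dist a' b' + dist b' b := dist_triangle4 a a' b' b
    _ ≤ r + d + r :=
      add_le_add_three haa'.le (hd a' ha' b' hb') (dist_comm b' b ▸ hbb').le

theorem exists_tailsWithin_of_tendsto {A : ℕ → Set Y} {δ : ℕ → ℝ}
    (hδ : Tendsto δ atTop (𝓝 0)) (hA : ∀ᶠ k in atTop, TailsWithin A k (δ k)) {r : ℝ}
    (hr : 0 < r) : ∃ N, TailsWithin A N r :=
  ((hA.and (hδ.eventually (gt_mem_nhds hr))).exists).imp fun _ h => h.1.mono h.2.le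

theorem TailsWithin.hausdorffDist_le {A : ℕ → Set Y} {N : ℕ} {r : ℝ} (h : TailsWithin A N r)
    (hr : 0 ≤ r) {m n : ℕ} (hm : N ≤ m) (hn : N ≤ n) (hAm : (A m).Nonempty)
    (hAn : (A n).Nonempty) : hausdorffDist (A m) (A n) ≤ r :=
  hausdorffDist_le_of_mem_dist hr
    (fun a ha => hAn.imp fun b hb => ⟨hb, h m hm n hn a ha b hb⟩)
    (fun b hb => hAm.imp fun a ha => ⟨ha, h n hn m hm b hb a ha⟩)

theorem hausdorffDist_singleton_le {A : Set Y} {s : Y} {r : ℝ} (hA : A.Nonempty) (hr : 0 ≤ r)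
    (h : ∀ a ∈ A, dist a s ≤ r) : hausdorffDist A {s} ≤ r :=
  hausdorffDist_le_of_mem_dist hr (fun a ha => ⟨s, rfl, h a ha⟩)
    (fun _ hs => hA.imp fun a ha => ⟨ha, mem_singleton_iff.1 hs ▸ dist_comm a s ▸ h a ha⟩)

/-- The limit point is produced together with the transfer of every tail bound to it, so that
rates which are uniform in a parameter stay uniform for the limit. -/
theorem exists_mem_forall_dist_le_of_tailsWithin {A : ℕ → Set Y} {S : Set Y}
    (hS : IsComplete S) (hAS : ∀ᶠ n in atTop, (A n).Nonempty ∧ A n ⊆ S)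
    (hA : ∀ r > 0, ∃ N, TailsWithin A N r) :
    ∃ s ∈ S, ∀ N r, TailsWithin A N r → ∀ m ≥ N, ∀ a ∈ A m, dist a s ≤ r := by
  obtain ⟨N₀, hN₀⟩ := eventually_atTop.1 hAS
  choose z hz using fun n => (hN₀ (n + N₀) (Nat.le_add_left _ _)).1
  have hzS : ∀ n, z n ∈ S := fun n => (hN₀ _ (Nat.le_add_left _ _)).2 (hz n)
  have hz_cauchy : CauchySeq z := by
    refine Metric.cauchySeq_iff'.2 fun ε hε => ?_
    obtain ⟨N, hN⟩ := hA (ε / 2) (half_pos hε)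
    exact ⟨N, fun n hn => (hN _ (by omega) _ (by omega) _ (hz n) _ (hz N)).trans_lt
      (half_lt_self hε)⟩
  obtain ⟨s, hsS, hzs⟩ := cauchySeq_tendsto_of_isComplete hS hzS hz_cauchy
  refine ⟨s, hsS, fun N r hN m hm a ha => ?_⟩
  exact le_of_tendsto (tendsto_const_nhds.dist hzs)
    (eventually_atTop.2 ⟨N, fun n hn => hN m hm _ (by omega) a ha (z n) (hz n)⟩)

end TailsWithin

theorem dist_lt_of_calGauge_lt {X Y : Type*} [MetricSpace Y] {Ψ : X → Set Y} {r : ℝ}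
    (h : calGauge Ψ < ENNReal.ofReal r) {x : X} {a b : Y} (ha : a ∈ Ψ x) (hb : b ∈ Ψ x) :
    dist a b < r :=
  edist_lt_ofReal.1 <| (edist_le_ediam_of_mem ha hb).trans_lt <|
    (le_iSup (fun x => ediam (Ψ x)) x).trans_lt h

theorem continuous_of_forall_exists_uscSetMap {X Y : Type*} [TopologicalSpace X]
    [MetricSpace Y] {s : X → Y}
    (h : ∀ ε > 0, ∃ Φ : X → Set Y, UscSetMap Φ ∧ (∀ x, (Φ x).Nonempty) ∧
      ∀ x, ∀ a ∈ Φ x, dist a (s x) ≤ ε) :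
    Continuous s := by
  refine continuous_iff_continuousAt.2 fun x => Metric.tendsto_nhds.2 fun ε hε => ?_
  obtain ⟨Φ, hΦ, hΦne, hΦs⟩ := h (ε / 3) (by positivity)
  have hnear : ∀ᶠ x' in 𝓝 x, Φ x' ⊆ thickening (ε / 3) (Φ x) :=
    (hΦ _ isOpen_thickening).mem_nhds (self_subset_thickening (by positivity) _)
  filter_upwards [hnear] with x' hx'
  obtain ⟨a, ha⟩ := hΦne x'
  obtain ⟨w, hw, haw⟩ := mem_thickening_iff.1 (hx' ha)
  calc dist (s x') (s x) ≤ dist (s x') a + dist a w + dist w (s x) := dist_triangle4 _ _ _ _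
    _ < ε / 3 + ε / 3 + ε / 3 :=
      add_lt_add_of_lt_of_le (add_lt_add_of_le_of_lt (dist_comm a (s x') ▸ hΦs x' a ha) haw)
        (hΦs x w hw)
    _ = ε := by ring

theorem limit_of_shrinking_submappings_is_selection_general
    {K Y : Type} [MetricSpace K] [MetricSpace Y]
    (F : K → Set Y) (hF : CompactSetMap F)
    (Ψ : ℕ → K → Set Y)
    (hΨne : ∀ k, 1 ≤ k → ∀ x, (Ψ k x).Nonempty)
    (hΨsub : ∀ k, 1 ≤ k → ∀ x, Ψ k x ⊆ F x)
    (hΨcomp : ∀ k, 1 ≤ k → CompactSetMap (Ψ k))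
    (hcal : ∀ k, 1 ≤ k → calGauge (Ψ k) < ENNReal.ofReal (1 / 2 ^ k))
    (happrox : ∀ m k, 1 ≤ k → k ≤ m → ∀ x,
      Ψ m x ⊆ Metric.thickening ((3 : ℝ) / 2 ^ k) (Ψ k x)) :
    ∃ s : C(K, Y), (∀ x, s x ∈ F x) ∧
      (∀ x, ∀ ε > (0 : ℝ), ∃ N : ℕ, ∀ m ≥ N, ∀ n ≥ N,
        Metric.hausdorffDist (Ψ m x) (Ψ n x) < ε) ∧
      ∀ x, Filter.Tendsto (fun k => Metric.hausdorffDist (Ψ k x) {s x})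
        Filter.atTop (𝓝 0) := by
  have hrate : Tendsto (fun k : ℕ => (7 : ℝ) / 2 ^ k) atTop (𝓝 0) :=
    tendsto_const_nhds.div_atTop (tendsto_pow_atTop_atTop_of_one_lt one_lt_two)
  have htails : ∀ x, ∀ k ≥ 1, TailsWithin (fun m => Ψ m x) k (7 / 2 ^ k) := fun x k hk =>
    (tailsWithin_of_subset_thickening
      (fun a ha b hb => (dist_lt_of_calGauge_lt (hcal k hk) ha hb).le)
      fun m hm => happrox m k hk hm x).mono (le_of_eq (by ring))
  have hsmall : ∀ r > 0, ∀ᶠ k in atTop, 1 ≤ k ∧ (7 : ℝ) / 2 ^ k < r := fun r hr =>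
    (eventually_ge_atTop 1).and (hrate.eventually (gt_mem_nhds hr))
  choose s hsF hs using fun x =>
    exists_mem_forall_dist_le_of_tailsWithin (hF.2 x).isComplete
      (eventually_atTop.2 ⟨1, fun n hn => ⟨hΨne n hn x, hΨsub n hn x⟩⟩)
      fun r hr => exists_tailsWithin_of_tendsto hrate (eventually_atTop.2 ⟨1, htails x⟩) hr
  have hs_cont : Continuous s := continuous_of_forall_exists_uscSetMap fun ε hε => by
    obtain ⟨k, hk, hkε⟩ := (hsmall ε hε).exists
    exact ⟨Ψ k, (hΨcomp k hk).1, hΨne k hk,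
      fun x a ha => (hs x k _ (htails x k hk) k le_rfl a ha).trans hkε.le⟩
  refine ⟨⟨s, hs_cont⟩, hsF, fun x ε hε => ?_, fun x => ?_⟩
  · obtain ⟨k, hk, hkε⟩ := (hsmall ε hε).exists
    exact ⟨k, fun m hm n hn => ((htails x k hk).hausdorffDist_le (by positivity) hm hn
      (hΨne m (hk.trans hm) x) (hΨne n (hk.trans hn) x)).trans_lt hkε⟩
  · refine squeeze_zero' (.of_forall fun _ => hausdorffDist_nonneg) ?_ hrate
    filter_upwards [eventually_ge_atTop 1] with k hk
    exact hausdorffDist_singleton_le (hΨne k hk x) (by positivity)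
      (hs x k _ (htails x k hk) k le_rfl)

/-- Let `F : K → Y` be a compact multivalued mapping of a compact metric space `K` into a
metric space `Y`, and let `{Ψ_k}` be a sequence of compact submappings of `F` such that
`cal Ψ_k < 1/2^k` for every `k ≥ 1` and `Ψ_m x ⊆ O(Ψ_k x, 3/2^k)` for all `m ≥ k ≥ 1` and
all `x`. Then for every `x` the sequence of compacta `{Ψ_k x}` is Cauchy in the Hausdorff
metric and converges to a single point `s x ∈ F x`, and the resulting single-valued map
`s : K → Y` is a continuous selection of `F`. -/
theorem limit_of_shrinking_submappings_is_selection
    {K Y : Type} [MetricSpace K] [CompactSpace K] [MetricSpace Y]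
    (F : K → Set Y) (hne : ∀ x, (F x).Nonempty) (hF : CompactSetMap F)
    (Ψ : ℕ → K → Set Y)
    (hΨne : ∀ k, 1 ≤ k → ∀ x, (Ψ k x).Nonempty)
    (hΨsub : ∀ k, 1 ≤ k → ∀ x, Ψ k x ⊆ F x)
    (hΨcomp : ∀ k, 1 ≤ k → CompactSetMap (Ψ k))
    (hcal : ∀ k, 1 ≤ k → calGauge (Ψ k) < ENNReal.ofReal (1 / 2 ^ k))
    (happrox : ∀ m k, 1 ≤ k → k ≤ m → ∀ x,
      Ψ m x ⊆ Metric.thickening ((3 : ℝ) / 2 ^ k) (Ψ k x)) :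
    ∃ s : C(K, Y), (∀ x, s x ∈ F x) ∧
      (∀ x, ∀ ε > (0 : ℝ), ∃ N : ℕ, ∀ m ≥ N, ∀ n ≥ N,
        Metric.hausdorffDist (Ψ m x) (Ψ n x) < ε) ∧
      ∀ x, Filter.Tendsto (fun k => Metric.hausdorffDist (Ψ k x) {s x})
        Filter.atTop (𝓝 0) :=
  limit_of_shrinking_submappings_is_selection_general F hF Ψ hΨne hΨsub hΨcomp hcal happrox

end
end
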